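/- Let H be a complex Hilbert space, D ⊆ H a linear subspace, and X_1,…,X_n linear operators mapping D into D, each Hermitian or skew-Hermitian on D, with [X_j, X_n] = Σ_{p=1}^{n} c_{j,p} X_p on D for each j ∈ {1,…,n−1}. Let m = (m_p) satisfy (A0), (A1), (A2) and (A3') with constant L ≥ 1. Suppose u ∈ D and C, A > 0 are such that A ≥ 1, A ≥ |c_{j,p}| for all j ∈ {1,…,n−1} and p ∈ {1,…,n}, ‖X'_{α'} u‖ ≤ C A^{|α'|} m_{|α'|} for all α' ∈ M(n−1), and ‖X_n^l u‖ ≤ C A^l m_l for all l ∈ ℕ. Then for all l ∈ ℕ, all α' ∈ M(n−1) and all γ ∈ M(n): |⟨X_n^l X_γ X'_{α'} u, u⟩| ≤ C² ((n+1)L)^{|γ|} A^{|α'| + |γ| + l} m_{|α'| + |γ| + l}. -/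

import Mathlib

open scoped ComplexInnerProductSpace

noncomputable section

/-- For a word `α = (i₁, …, i_k)`, `applyWord X α u = X_{i₁} (X_{i₂} ( ⋯ (X_{i_k} u)))`. -/
def applyWord {E : Type*} [NormedAddCommGroup E] [InnerProductSpace ℂ E] {ι : Type*}
    (X : ι → E →ₗ[ℂ] E) (α : List ι) (u : E) : E :=
  α.foldr (fun i v => X i v) u

section GSRAux

variable {E : Type*} [NormedAddCommGroup E] [InnerProductSpace ℂ E] {ι : Type*}

@[simp] lemma applyWord_nil (X : ι → E →ₗ[ℂ] E) (u : E) : applyWord X [] u = u := rfl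

@[simp] lemma applyWord_cons (X : ι → E →ₗ[ℂ] E) (i : ι) (w : List ι) (u : E) :
    applyWord X (i :: w) u = X i (applyWord X w u) := rfl

lemma applyWord_append (X : ι → E →ₗ[ℂ] E) (a b : List ι) (u : E) :
    applyWord X (a ++ b) u = applyWord X a (applyWord X b u) := by
  simp [applyWord, List.foldr_append]

/-- The word map as a linear map. -/
def wordMap (X : ι → E →ₗ[ℂ] E) : List ι → (E →ₗ[ℂ] E)
  | [] => LinearMap.id
  | i :: w => (X i) ∘ₗ wordMap X w

lemma applyWord_eq_wordMap (X : ι → E →ₗ[ℂ] E) (w : List ι) (u : E) :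
    applyWord X w u = wordMap X w u := by
  induction w with
  | nil => rfl
  | cons i w ih => simp [wordMap, ih]

lemma applyWord_zero (X : ι → E →ₗ[ℂ] E) (w : List ι) :
    applyWord X w (0 : E) = 0 := by
  rw [applyWord_eq_wordMap]; exact map_zero _

lemma applyWord_add (X : ι → E →ₗ[ℂ] E) (w : List ι) (x y : E) :
    applyWord X w (x + y) = applyWord X w x + applyWord X w y := by
  simp only [applyWord_eq_wordMap]; exact map_add _ _ _

lemma applyWord_smul (X : ι → E →ₗ[ℂ] E) (w : List ι) (a : ℂ) (x : E) :
    applyWord X w (a • x) = a • applyWord X w x := by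
  simp only [applyWord_eq_wordMap]; exact map_smul _ _ _

lemma applyWord_sum (X : ι → E →ₗ[ℂ] E) (w : List ι) {κ : Type*} (s : Finset κ)
    (f : κ → E) : applyWord X w (∑ p ∈ s, f p) = ∑ p ∈ s, applyWord X w (f p) := by
  simp only [applyWord_eq_wordMap]; exact map_sum _ _ _

lemma applyWord_mem (X : ι → E →ₗ[ℂ] E) {D : Submodule ℂ E}
    (hXD : ∀ i, ∀ x ∈ D, X i x ∈ D) (w : List ι) {u : E} (hu : u ∈ D) :
    applyWord X w u ∈ D := by
  induction w with
  | nil => exact hu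
  | cons i w ih => exact hXD i _ ih

lemma applyWord_replicate_pow (X : ι → E →ₗ[ℂ] E) (i : ι) (l : ℕ) (u : E) :
    applyWord X (List.replicate l i) u = (X i ^ l) u := by
  induction l with
  | zero => rfl
  | succ l ih => rw [List.replicate_succ, applyWord_cons, ih, pow_succ']; rfl

lemma applyWord_replicate_comm (X : ι → E →ₗ[ℂ] E) (i : ι) (l : ℕ) (z : E) :
    applyWord X (List.replicate l i) (X i z) = X i (applyWord X (List.replicate l i) z) := by
  rw [applyWord_replicate_pow, applyWord_replicate_pow, ← Module.End.mul_apply,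
    ← pow_succ, pow_succ', Module.End.mul_apply]

lemma norm_inner_move_one (X : ι → E →ₗ[ℂ] E) (D : Submodule ℂ E) (i : ι)
    (h : (∀ u ∈ D, ∀ v ∈ D, ⟪X i u, v⟫ = ⟪u, X i v⟫) ∨
         (∀ u ∈ D, ∀ v ∈ D, ⟪X i u, v⟫ = -⟪u, X i v⟫))
    {v w : E} (hv : v ∈ D) (hw : w ∈ D) :
    ‖⟪X i v, w⟫‖ = ‖⟪v, X i w⟫‖ := by
  rcases h with h | h
  · rw [h v hv w hw]
  · rw [h v hv w hw, norm_neg]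

lemma norm_inner_move_replicate (X : ι → E →ₗ[ℂ] E) (D : Submodule ℂ E)
    (hXD : ∀ i, ∀ x ∈ D, X i x ∈ D) (i : ι)
    (h : (∀ u ∈ D, ∀ v ∈ D, ⟪X i u, v⟫ = ⟪u, X i v⟫) ∨
         (∀ u ∈ D, ∀ v ∈ D, ⟪X i u, v⟫ = -⟪u, X i v⟫)) :
    ∀ (l : ℕ) {v w : E}, v ∈ D → w ∈ D →
      ‖⟪applyWord X (List.replicate l i) v, w⟫‖ =
        ‖⟪v, applyWord X (List.replicate l i) w⟫‖ := by
  intro l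
  induction l with
  | zero => intro v w _ _; rfl
  | succ l ih =>
    intro v w hv hw
    rw [List.replicate_succ, applyWord_cons,
      norm_inner_move_one X D i h (applyWord_mem X hXD _ hv) hw,
      ih hv (hXD i w hw)]
    congr 2
    rw [show (X i) w = applyWord X [i] w from rfl, ← applyWord_append,
      ← List.replicate_succ', List.replicate_succ]

/-- Supermultiplicativity of a log-convex sequence with `m 0 = 1`. -/
lemma m_super (m : ℕ → ℝ) (hmpos : ∀ p, 0 < m p) (hm0 : m 0 = 1)
    (hA1 : ∀ p : ℕ, 1 ≤ p → (m p) ^ 2 ≤ m (p - 1) * m (p + 1)) (p q : ℕ) :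
    m p * m q ≤ m (p + q) := by
  have hf : ∀ k, 0 < m (k + 1) / m k := fun k => div_pos (hmpos _) (hmpos _)
  have hmono : Monotone (fun k => m (k + 1) / m k) := by
    apply monotone_nat_of_le_succ
    intro k
    have h := hA1 (k + 1) (by omega)
    simp only [Nat.add_sub_cancel] at h
    rw [div_le_div_iff₀ (hmpos k) (hmpos (k + 1))]
    calc m (k + 1) * m (k + 1) = m (k + 1) ^ 2 := (sq (m (k + 1))).symm
      _ ≤ m k * m (k + 1 + 1) := h
      _ = m (k + 1 + 1) * m k := mul_comm _ _
  have hprod : ∀ (q p : ℕ),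
      m (q + p) = m q * ∏ i ∈ Finset.range p, (m (q + i + 1) / m (q + i)) := by
    intro q p
    induction p with
    | zero => simp
    | succ p ih =>
      rw [Finset.prod_range_succ, ← mul_assoc, ← ih]
      exact (mul_div_cancel₀ _ (ne_of_gt (hmpos (q + p)))).symm
  have h1 : m p = ∏ i ∈ Finset.range p, (m (i + 1) / m i) := by
    simpa [hm0] using hprod 0 p
  calc m p * m q = m q * ∏ i ∈ Finset.range p, (m (i + 1) / m i) := by rw [h1]; ring
    _ ≤ m q * ∏ i ∈ Finset.range p, (m (q + i + 1) / m (q + i)) := by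
        apply mul_le_mul_of_nonneg_left _ (le_of_lt (hmpos q))
        exact Finset.prod_le_prod (fun i _ => le_of_lt (hf i))
          (fun i _ => hmono (Nat.le_add_left i q))
    _ = m (q + p) := (hprod q p).symm
    _ = m (p + q) := by rw [Nat.add_comm]

lemma split_word {n : ℕ} (γ : List (Fin (n + 1))) :
    (∃ σ : List (Fin n), γ = σ.map Fin.castSucc) ∨
    (∃ σ : List (Fin n), ∃ δ : List (Fin (n + 1)),
      γ = σ.map Fin.castSucc ++ Fin.last n :: δ) := by
  induction γ with
  | nil => exact Or.inl ⟨[], rfl⟩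
  | cons i γ ih =>
    by_cases hi : i = Fin.last n
    · exact Or.inr ⟨[], γ, by rw [hi]; rfl⟩
    · obtain ⟨j, rfl⟩ : ∃ j : Fin n, i = j.castSucc :=
        ⟨i.castPred hi, (Fin.castSucc_castPred i hi).symm⟩
      rcases ih with ⟨σ, rfl⟩ | ⟨σ, δ, rfl⟩
      · exact Or.inl ⟨j :: σ, rfl⟩
      · exact Or.inr ⟨j :: σ, δ, rfl⟩

/-- Error terms from commuting `X (last n)` leftwards through a word of primed letters. -/
def Eterm {E : Type*} [NormedAddCommGroup E] [InnerProductSpace ℂ E] {n : ℕ}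
    (X : Fin (n + 1) → E →ₗ[ℂ] E) (c : Fin n → Fin (n + 1) → ℂ) :
    List (Fin n) → E → E
  | [], _ => 0
  | j :: σ, v =>
      (∑ p : Fin (n + 1), c j p • applyWord X (p :: σ.map Fin.castSucc) v)
        + X j.castSucc (Eterm X c σ v)

lemma comm_identity {n : ℕ} (X : Fin (n + 1) → E →ₗ[ℂ] E) (D : Submodule ℂ E)
    (hXD : ∀ i, ∀ x ∈ D, X i x ∈ D) (c : Fin n → Fin (n + 1) → ℂ)
    (hcomm : ∀ j : Fin n, ∀ x ∈ D,
      X j.castSucc (X (Fin.last n) x) - X (Fin.last n) (X j.castSucc x) =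
        ∑ p : Fin (n + 1), c j p • X p x)
    (σ : List (Fin n)) {v : E} (hv : v ∈ D) :
    applyWord X (σ.map Fin.castSucc) (X (Fin.last n) v) =
      X (Fin.last n) (applyWord X (σ.map Fin.castSucc) v) + Eterm X c σ v := by
  induction σ with
  | nil => simp [Eterm]
  | cons j σ ih =>
    have hw : applyWord X (σ.map Fin.castSucc) v ∈ D := applyWord_mem X hXD _ hv
    have hc : X j.castSucc (X (Fin.last n) (applyWord X (σ.map Fin.castSucc) v)) =
        X (Fin.last n) (X j.castSucc (applyWord X (σ.map Fin.castSucc) v)) +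
          ∑ p : Fin (n + 1), c j p • X p (applyWord X (σ.map Fin.castSucc) v) := by
      have := hcomm j _ hw
      linear_combination (norm := module) this
    calc applyWord X ((j :: σ).map Fin.castSucc) (X (Fin.last n) v)
        = X j.castSucc (applyWord X (σ.map Fin.castSucc) (X (Fin.last n) v)) := rfl
      _ = X j.castSucc (X (Fin.last n) (applyWord X (σ.map Fin.castSucc) v)
            + Eterm X c σ v) := by rw [ih]
      _ = X j.castSucc (X (Fin.last n) (applyWord X (σ.map Fin.castSucc) v))
            + X j.castSucc (Eterm X c σ v) := map_add _ _ _
      _ = X (Fin.last n) (applyWord X ((j :: σ).map Fin.castSucc) v)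
            + Eterm X c (j :: σ) v := by
          rw [hc, Eterm]
          simp only [List.map_cons, applyWord_cons]
          abel

end GSRAux

/-- estimate (3.2) in the proof of Proposition 3.3.
The family consists of `n+1` operators (the paper's `n` operators, so the paper's
constant `(n+1)L` becomes `(n+2)L` here), with `X_n = X (Fin.last n)` and
`X' = X ∘ Fin.castSucc`, the commutation relations `[X_j, X_n] = Σ_p c_{j,p} X_p` on
`D`.  Under (A0)–(A2) and (A3') with constant `L ≥ 1` for the sequence `m`, and the
bounds `A ≥ 1`, `A ≥ |c_{j,p}|`, `‖X'_{α'} u‖ ≤ C A^{|α'|} m_{|α'|}` and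
`‖X_nˡ u‖ ≤ C Aˡ m_l`, one has for all `l`, `α' ∈ M(n-1)`, `γ ∈ M(n)`:
`|⟨X_nˡ X_γ X'_{α'} u, u⟩| ≤ C² ((n+1)L)^{|γ|} A^{|α'|+|γ|+l} m_{|α'|+|γ|+l}`. -/
theorem gsr_induction_estimate_span
    {E : Type*} [NormedAddCommGroup E] [InnerProductSpace ℂ E] [CompleteSpace E]
    (n : ℕ) (hn : 1 ≤ n) (D : Submodule ℂ E)
    (X : Fin (n + 1) → E →ₗ[ℂ] E)
    (hXD : ∀ i, ∀ x ∈ D, X i x ∈ D)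
    (hherm : ∀ i, (∀ u ∈ D, ∀ v ∈ D, ⟪X i u, v⟫ = ⟪u, X i v⟫) ∨
                  (∀ u ∈ D, ∀ v ∈ D, ⟪X i u, v⟫ = -⟪u, X i v⟫))
    (c : Fin n → Fin (n + 1) → ℂ)
    (hcomm : ∀ j : Fin n, ∀ x ∈ D,
      X j.castSucc (X (Fin.last n) x) - X (Fin.last n) (X j.castSucc x) =
        ∑ p : Fin (n + 1), c j p • X p x)
    (m : ℕ → ℝ) (hmpos : ∀ p, 0 < m p)
    (hA0 : m 0 = 1 ∧ m 1 = 1)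
    (hA1 : ∀ p : ℕ, 1 ≤ p → (m p) ^ 2 ≤ m (p - 1) * m (p + 1))
    (hA2 : ∃ H : ℝ, 0 < H ∧ ∀ p q, m (p + q) ≤ H ^ (p + q) * m p * m q)
    (L : ℝ) (hL : 1 ≤ L)
    (hA3' : ∀ p : ℕ, 1 ≤ p → (p : ℝ) * m (p - 1) ≤ L * m p)
    (u : E) (hu : u ∈ D)
    (C A : ℝ) (hC : 0 < C) (hA : 0 < A) (hA1' : 1 ≤ A)
    (hAc : ∀ (j : Fin n) (p : Fin (n + 1)), ‖c j p‖ ≤ A)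
    (hbound' : ∀ α' : List (Fin n),
      ‖applyWord X (α'.map Fin.castSucc) u‖ ≤ C * A ^ α'.length * m α'.length)
    (hboundn : ∀ l : ℕ, ‖(X (Fin.last n) ^ l) u‖ ≤ C * A ^ l * m l) :
    ∀ (l : ℕ) (α' : List (Fin n)) (γ : List (Fin (n + 1))),
      ‖⟪applyWord X
          (List.replicate l (Fin.last n) ++ γ ++ α'.map Fin.castSucc) u, u⟫‖ ≤
        C ^ 2 * ((n + 2) * L) ^ γ.length * A ^ (α'.length + γ.length + l) *
          m (α'.length + γ.length + l) := by
  obtain ⟨hm0, hm1⟩ := hA0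
  have hLpos : (0:ℝ) < L := lt_of_lt_of_le one_pos hL
  have hnn : (0:ℝ) ≤ (n:ℝ) := Nat.cast_nonneg n
  set B : ℝ := ((n : ℝ) + 2) * L with hBdef
  have hBpos : 0 < B := by nlinarith
  have hB1 : (1:ℝ) ≤ B := by nlinarith
  have hsuper := m_super m hmpos hm0 hA1
  suffices H : ∀ g : ℕ, ∀ γ : List (Fin (n + 1)), γ.length = g →
      ∀ (l : ℕ) (α' : List (Fin n)),
      ‖⟪applyWord X
          (List.replicate l (Fin.last n) ++ γ ++ α'.map Fin.castSucc) u, u⟫‖ ≤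
        C ^ 2 * B ^ γ.length * A ^ (α'.length + γ.length + l) *
          m (α'.length + γ.length + l) by
    intro l α' γ; exact H γ.length γ rfl l α'
  intro g
  induction g using Nat.strong_induction_on with
  | _ g IH =>
  intro γ hγ l α'
  rcases split_word γ with ⟨σ, rfl⟩ | ⟨σ, δ, rfl⟩
  · -- base case : no occurrence of `Fin.last n` in `γ`
    have hw : List.replicate l (Fin.last n) ++ σ.map Fin.castSucc ++ α'.map Fin.castSucc
        = List.replicate l (Fin.last n) ++ (σ ++ α').map Fin.castSucc := by
      simp [List.map_append, List.append_assoc]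
    rw [hw, applyWord_append]
    have hx : applyWord X ((σ ++ α').map Fin.castSucc) u ∈ D := applyWord_mem X hXD _ hu
    rw [norm_inner_move_replicate X D hXD _ (hherm _) l hx hu]
    have hcs : ‖⟪applyWord X ((σ ++ α').map Fin.castSucc) u,
        applyWord X (List.replicate l (Fin.last n)) u⟫‖ ≤
        (C * A ^ (σ.length + α'.length) * m (σ.length + α'.length)) * (C * A ^ l * m l) := by
      calc ‖⟪applyWord X ((σ ++ α').map Fin.castSucc) u,
            applyWord X (List.replicate l (Fin.last n)) u⟫‖
          ≤ ‖applyWord X ((σ ++ α').map Fin.castSucc) u‖ *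
            ‖applyWord X (List.replicate l (Fin.last n)) u‖ :=
            norm_inner_le_norm (𝕜 := ℂ) _ _
        _ ≤ (C * A ^ (σ.length + α'.length) * m (σ.length + α'.length)) *
            (C * A ^ l * m l) := by
            apply mul_le_mul _ _ (norm_nonneg _)
              (mul_nonneg (mul_nonneg hC.le (pow_nonneg hA.le _)) (hmpos _).le)
            · have := hbound' (σ ++ α')
              simpa [List.length_append] using this
            · rw [applyWord_replicate_pow]; exact hboundn l
    have hsup : m (σ.length + α'.length) * m l ≤ m (σ.length + α'.length + l) :=
      hsuper _ _
    have hmle : (C * A ^ (σ.length + α'.length) * m (σ.length + α'.length)) *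
        (C * A ^ l * m l) ≤ C ^ 2 * A ^ (σ.length + α'.length + l) *
          m (σ.length + α'.length + l) := by
      have h1 : (C * A ^ (σ.length + α'.length) * m (σ.length + α'.length)) *
          (C * A ^ l * m l) = (C ^ 2 * A ^ (σ.length + α'.length + l)) *
            (m (σ.length + α'.length) * m l) := by
        rw [pow_add]; ring
      rw [h1]
      calc (C ^ 2 * A ^ (σ.length + α'.length + l)) *
            (m (σ.length + α'.length) * m l)
          ≤ (C ^ 2 * A ^ (σ.length + α'.length + l)) *
            m (σ.length + α'.length + l) := by
            apply mul_le_mul_of_nonneg_left hsup (by positivity)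
        _ = C ^ 2 * A ^ (σ.length + α'.length + l) * m (σ.length + α'.length + l) := by
            ring
    have hidx : σ.length + α'.length + l = α'.length + (σ.map (Fin.castSucc (n := n))).length + l := by
      simp; omega
    have hBge : (1:ℝ) ≤ B ^ (σ.map (Fin.castSucc (n := n))).length := one_le_pow₀ hB1
    calc ‖⟪applyWord X ((σ ++ α').map Fin.castSucc) u,
          applyWord X (List.replicate l (Fin.last n)) u⟫‖
        ≤ C ^ 2 * A ^ (σ.length + α'.length + l) * m (σ.length + α'.length + l) :=
          le_trans hcs hmle
      _ = C ^ 2 * A ^ (α'.length + (σ.map (Fin.castSucc (n := n))).length + l) *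
          m (α'.length + (σ.map (Fin.castSucc (n := n))).length + l) := by rw [hidx]
      _ ≤ C ^ 2 * B ^ (σ.map (Fin.castSucc (n := n))).length *
          A ^ (α'.length + (σ.map (Fin.castSucc (n := n))).length + l) *
          m (α'.length + (σ.map (Fin.castSucc (n := n))).length + l) := by
          have hme := hmpos (α'.length + (σ.map (Fin.castSucc (n := n))).length + l)
          calc C ^ 2 * A ^ (α'.length + (σ.map (Fin.castSucc (n := n))).length + l) *
              m (α'.length + (σ.map (Fin.castSucc (n := n))).length + l)
              = C ^ 2 * 1 * A ^ (α'.length + (σ.map (Fin.castSucc (n := n))).length + l) *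
                m (α'.length + (σ.map (Fin.castSucc (n := n))).length + l) := by ring
            _ ≤ C ^ 2 * B ^ (σ.map (Fin.castSucc (n := n))).length *
                A ^ (α'.length + (σ.map (Fin.castSucc (n := n))).length + l) *
                m (α'.length + (σ.map (Fin.castSucc (n := n))).length + l) := by
                apply mul_le_mul_of_nonneg_right _ hme.le
                apply mul_le_mul_of_nonneg_right _ (pow_pos hA _).le
                exact mul_le_mul_of_nonneg_left hBge (pow_pos hC 2).le
  · -- inductive step : `γ = σ' ++ last :: δ`
    have hglen : (σ.map (Fin.castSucc (n := n)) ++ Fin.last n :: δ).length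
        = σ.length + δ.length + 1 := by
      simp only [List.length_append, List.length_map, List.length_cons]; omega
    have hlt : σ.length + δ.length < g := by rw [← hγ, hglen]; omega
    set e : ℕ := α'.length + (σ.length + δ.length) + l with he
    rw [hglen, show α'.length + (σ.length + δ.length + 1) + l = e + 1 from by omega]
    simp only [List.append_assoc, List.cons_append, applyWord_append, applyWord_cons]
    set w0 : E := applyWord X δ (applyWord X (List.map Fin.castSucc α') u) with hw0
    have hw0D : w0 ∈ D := applyWord_mem X hXD _ (applyWord_mem X hXD _ hu)
    set K : ℝ := C ^ 2 * B ^ (σ.length + δ.length) * A ^ e * m e with hKdef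
    have hKpos : 0 < K := by
      exact mul_pos (mul_pos (mul_pos (pow_pos hC 2) (pow_pos hBpos _)) (pow_pos hA _))
        (hmpos _)
    have hid := comm_identity X D hXD c hcomm σ (v := w0) hw0D
    rw [hid, applyWord_add, inner_add_left]
    refine le_trans (norm_add_le _ _) ?_
    rw [applyWord_replicate_comm]
    -- first summand via the induction hypothesis at `l + 1`
    have hIH1 := IH (σ.length + δ.length) hlt (σ.map Fin.castSucc ++ δ)
      (by simp) (l + 1) α'
    rw [show (σ.map (Fin.castSucc (n := n)) ++ δ).length = σ.length + δ.length from by simp]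
      at hIH1
    rw [show α'.length + (σ.length + δ.length) + (l + 1) = e + 1 from by omega] at hIH1
    simp only [List.append_assoc, List.cons_append, applyWord_append, applyWord_cons,
      List.replicate_succ] at hIH1
    rw [← hw0] at hIH1
    -- second summand : the commutator error terms
    have Ebound : ∀ σ' : List (Fin n), ∀ τ : List (Fin n),
        τ.length + σ'.length = σ.length →
        ‖⟪applyWord X (List.replicate l (Fin.last n))
            (applyWord X (τ.map Fin.castSucc) (Eterm X c σ' w0)), u⟫‖ ≤
          (σ'.length : ℝ) * (((n : ℝ) + 1) * A * K) := by
      intro σ'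
      induction σ' with
      | nil =>
        intro τ h
        simp [Eterm, applyWord_zero, inner_zero_left, norm_zero]
      | cons j σ' ihE =>
        intro τ hτ
        simp only [List.length_cons] at hτ
        simp only [Eterm]
        rw [applyWord_add, applyWord_add, inner_add_left]
        refine le_trans (norm_add_le _ _) ?_
        have hsumterm : ‖⟪applyWord X (List.replicate l (Fin.last n))
            (applyWord X (τ.map Fin.castSucc)
              (∑ p : Fin (n + 1), c j p •
                applyWord X (p :: σ'.map Fin.castSucc) w0)), u⟫‖ ≤
            ((n : ℝ) + 1) * A * K := by
          rw [applyWord_sum, applyWord_sum, sum_inner]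
          refine le_trans (norm_sum_le _ _) ?_
          have hterm : ∀ p : Fin (n + 1),
              ‖⟪applyWord X (List.replicate l (Fin.last n))
                  (applyWord X (τ.map Fin.castSucc)
                    (c j p • applyWord X (p :: σ'.map Fin.castSucc) w0)), u⟫‖ ≤
                A * K := by
            intro p
            rw [applyWord_smul, applyWord_smul, inner_smul_left, norm_mul, RCLike.norm_conj]
            have hIHp := IH (σ.length + δ.length) hlt
              (τ.map Fin.castSucc ++ p :: (σ'.map Fin.castSucc ++ δ))
              (by simp only [List.length_append, List.length_map, List.length_cons]; omega)
              l α'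
            rw [show (τ.map (Fin.castSucc (n := n)) ++
                p :: (σ'.map Fin.castSucc ++ δ)).length = σ.length + δ.length from by
              simp only [List.length_append, List.length_map, List.length_cons]; omega]
              at hIHp
            rw [show α'.length + (σ.length + δ.length) + l = e from by omega] at hIHp
            rw [← hKdef] at hIHp
            simp only [List.append_assoc, List.cons_append, applyWord_append,
              applyWord_cons] at hIHp
            rw [← hw0] at hIHp
            have hc1 : ‖c j p‖ ≤ A := hAc j p
            exact mul_le_mul hc1 hIHp (norm_nonneg _) hA.le
          calc ∑ p : Fin (n + 1),
                ‖⟪applyWord X (List.replicate l (Fin.last n))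
                  (applyWord X (τ.map Fin.castSucc)
                    (c j p • applyWord X (p :: σ'.map Fin.castSucc) w0)), u⟫‖
              ≤ ∑ _p : Fin (n + 1), A * K := Finset.sum_le_sum (fun p _ => hterm p)
            _ = ((n : ℝ) + 1) * A * K := by
                simp only [Finset.sum_const, Finset.card_univ, Fintype.card_fin,
                  nsmul_eq_mul]
                push_cast; ring
        have hrest := ihE (τ ++ [j])
          (by simp only [List.length_append, List.length_cons, List.length_nil]; omega)
        simp only [List.map_append, List.map_cons, List.map_nil, applyWord_append,
          applyWord_cons, applyWord_nil] at hrest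
        refine le_trans (add_le_add hsumterm hrest) ?_
        have hcast : (((j :: σ').length : ℕ) : ℝ) = (σ'.length : ℝ) + 1 := by
          push_cast [List.length_cons]; ring
        rw [hcast]
        have : ((σ'.length : ℝ) + 1) * (((n : ℝ) + 1) * A * K) =
            (σ'.length : ℝ) * (((n : ℝ) + 1) * A * K) + ((n : ℝ) + 1) * A * K := by ring
        rw [this]
        linarith
    have hT2 := Ebound σ [] (by simp)
    simp only [List.map_nil, applyWord_nil] at hT2
    refine le_trans (add_le_add hIH1 hT2) ?_
    -- final numeric bookkeeping
    have hstep : (σ.length : ℝ) * m e ≤ L * m (e + 1) := by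
      have h1 : (σ.length : ℝ) ≤ ((e + 1 : ℕ) : ℝ) := by
        have hx : σ.length ≤ e + 1 := by rw [he]; omega
        exact_mod_cast hx
      have h2 := hA3' (e + 1) (by omega)
      simp only [Nat.add_sub_cancel] at h2
      calc (σ.length : ℝ) * m e ≤ ((e + 1 : ℕ) : ℝ) * m e :=
            mul_le_mul_of_nonneg_right h1 (hmpos e).le
        _ ≤ L * m (e + 1) := by exact_mod_cast h2
    have hT2' : (σ.length : ℝ) * (((n : ℝ) + 1) * A * K) ≤
        ((n : ℝ) + 1) * L * (C ^ 2 * B ^ (σ.length + δ.length) * A ^ (e + 1) * m (e + 1)) := by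
      have h2 : (σ.length : ℝ) * (((n : ℝ) + 1) * A * K) =
          (((n : ℝ) + 1) * (C ^ 2 * B ^ (σ.length + δ.length)) * A ^ (e + 1)) *
            ((σ.length : ℝ) * m e) := by
        rw [hKdef, pow_succ]; ring
      rw [h2]
      have hpos : (0 : ℝ) ≤ ((n : ℝ) + 1) * (C ^ 2 * B ^ (σ.length + δ.length)) * A ^ (e + 1) :=
        mul_nonneg (mul_nonneg (by linarith) (mul_pos (pow_pos hC 2)
          (pow_pos hBpos _)).le) (pow_pos hA _).le
      calc (((n : ℝ) + 1) * (C ^ 2 * B ^ (σ.length + δ.length)) * A ^ (e + 1)) *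
            ((σ.length : ℝ) * m e)
          ≤ (((n : ℝ) + 1) * (C ^ 2 * B ^ (σ.length + δ.length)) * A ^ (e + 1)) *
            (L * m (e + 1)) := mul_le_mul_of_nonneg_left hstep hpos
        _ = ((n : ℝ) + 1) * L *
            (C ^ 2 * B ^ (σ.length + δ.length) * A ^ (e + 1) * m (e + 1)) := by ring
    have hQpos : 0 < C ^ 2 * B ^ (σ.length + δ.length) * A ^ (e + 1) * m (e + 1) :=
      mul_pos (mul_pos (mul_pos (pow_pos hC 2) (pow_pos hBpos _)) (pow_pos hA _)) (hmpos _)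
    have hco : 1 + ((n : ℝ) + 1) * L ≤ ((n : ℝ) + 2) * L := by nlinarith
    have hfin : C ^ 2 * B ^ (σ.length + δ.length) * A ^ (e + 1) * m (e + 1) +
        ((n : ℝ) + 1) * L * (C ^ 2 * B ^ (σ.length + δ.length) * A ^ (e + 1) * m (e + 1)) ≤
        C ^ 2 * B ^ (σ.length + δ.length + 1) * A ^ (e + 1) * m (e + 1) := by
      calc C ^ 2 * B ^ (σ.length + δ.length) * A ^ (e + 1) * m (e + 1) +
            ((n : ℝ) + 1) * L * (C ^ 2 * B ^ (σ.length + δ.length) * A ^ (e + 1) * m (e + 1))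
          = (1 + ((n : ℝ) + 1) * L) *
            (C ^ 2 * B ^ (σ.length + δ.length) * A ^ (e + 1) * m (e + 1)) := by ring
        _ ≤ (((n : ℝ) + 2) * L) *
            (C ^ 2 * B ^ (σ.length + δ.length) * A ^ (e + 1) * m (e + 1)) :=
            mul_le_mul_of_nonneg_right hco hQpos.le
        _ = C ^ 2 * B ^ (σ.length + δ.length + 1) * A ^ (e + 1) * m (e + 1) := by
            rw [pow_succ, hBdef]; ring
    linarith
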